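/- Let X be a Banach space and let Y, Z be closed subspaces of X with X = Y ⊕ Z (algebraic and topological direct sum) such that the sum is absolute, i.e. for all y, y' ∈ Y and z, z' ∈ Z with ‖y‖ = ‖y'‖ and ‖z‖ = ‖z'‖ one has ‖y + z‖ = ‖y' + z'‖. If Y and Z are nonzero, then n(X) ≤ min{n(Y), n(Z)}. -/

import Mathlib

open MeasureTheory NormedSpace Metric Filter
open scoped ENNReal NNReal Topology

/-- The numerical radius of a bounded linear operator `T` on a normed space `X`:
`v(T) = sup {‖x*(Tx)‖ : ‖x‖ = ‖x*‖ = x*(x) = 1}`. -/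
noncomputable def numRadius (𝕜 : Type*) [RCLike 𝕜] (X : Type*) [NormedAddCommGroup X]
    [NormedSpace 𝕜 X] (T : X →L[𝕜] X) : ℝ :=
  sSup {r : ℝ | ∃ (x : X) (f : StrongDual 𝕜 X),
    ‖x‖ = 1 ∧ ‖f‖ = 1 ∧ f x = 1 ∧ r = ‖f (T x)‖}

/-- The numerical index of a normed space `X`:
`n(X) = inf {v(T) : T ∈ L(X), ‖T‖ = 1}`. -/
noncomputable def numIndex (𝕜 : Type*) [RCLike 𝕜] (X : Type*) [NormedAddCommGroup X]
    [NormedSpace 𝕜 X] : ℝ :=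
  sInf {r : ℝ | ∃ T : X →L[𝕜] X, ‖T‖ = 1 ∧ r = numRadius 𝕜 X T}

/-!
In an absolute sum `X = Y ⊕ Z` one has `‖y‖ ≤ ‖y + z‖` (average `y + z` and `y - z`, which have the
same norm), so the projection `P` onto `Y` along `Z` is contractive. An operator `S` on `Y` of norm one
therefore extends to the operator `S ∘ P` on `X`, again of norm one. If `(x, f)` is a state of `X`
with `x = y + z`, then comparing `f` at `y + z` and at `w + z` for all `w ∈ Y` with `‖w‖ = ‖y‖`
shows that `f|_Y` attains its norm at `y`; after normalisation, `f (S y)` is a value of the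
numerical range of `S`, scaled by `‖f|_Y‖ ‖y‖ ≤ 1`. Hence `v(S ∘ P) ≤ v(S)`, and `n(X) ≤ n(Y)`.
-/

section NumericalRadius

variable {𝕜 : Type*} [RCLike 𝕜] {E : Type*} [NormedAddCommGroup E] [NormedSpace 𝕜 E]

lemma numRadius_nonneg (T : E →L[𝕜] E) : 0 ≤ numRadius 𝕜 E T :=
  Real.sSup_nonneg (by rintro r ⟨x, f, -, -, -, rfl⟩; positivity)

lemma le_numRadius (T : E →L[𝕜] E) {x : E} {f : StrongDual 𝕜 E} (hx : ‖x‖ = 1) (hf : ‖f‖ = 1)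
    (hfx : f x = 1) : ‖f (T x)‖ ≤ numRadius 𝕜 E T := by
  refine le_csSup ⟨‖T‖, ?_⟩ ⟨x, f, hx, hf, hfx, rfl⟩
  rintro r ⟨x, f, hx, hf, -, rfl⟩
  simpa [hx, hf] using f.le_opNorm_of_le (T.le_opNorm x)

lemma numIndex_le_numRadius {T : E →L[𝕜] E} (hT : ‖T‖ = 1) : numIndex 𝕜 E ≤ numRadius 𝕜 E T :=
  csInf_le ⟨0, by rintro r ⟨T, -, rfl⟩; exact numRadius_nonneg T⟩ ⟨T, hT, rfl⟩

lemma numIndex_le_numIndex_of_forall_exists {F : Type*} [NormedAddCommGroup F] [NormedSpace 𝕜 F]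
    [Nontrivial F] (h : ∀ S : F →L[𝕜] F, ‖S‖ = 1 →
      ∃ T : E →L[𝕜] E, ‖T‖ = 1 ∧ numRadius 𝕜 E T ≤ numRadius 𝕜 F S) :
    numIndex 𝕜 E ≤ numIndex 𝕜 F := by
  refine le_csInf ⟨_, ContinuousLinearMap.id 𝕜 F, ContinuousLinearMap.norm_id, rfl⟩ ?_
  rintro r ⟨S, hS, rfl⟩
  obtain ⟨T, hT, hTS⟩ := h S hS
  exact (numIndex_le_numRadius hT).trans hTS

open RCLike in
lemma norm_apply_le_numRadius_mul (S : E →L[𝕜] E) {φ : StrongDual 𝕜 E} {y : E}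
    (hφy : ‖φ‖ * ‖y‖ ≤ re (φ y)) : ‖φ (S y)‖ ≤ numRadius 𝕜 E S * (‖φ‖ * ‖y‖) := by
  rcases eq_or_ne φ 0 with rfl | hφ
  · simp
  rcases eq_or_ne y 0 with rfl | hy
  · simp
  set ψ := (‖φ‖⁻¹ : 𝕜) • φ
  set u := (‖y‖⁻¹ : 𝕜) • y
  have hψ : ‖ψ‖ = 1 := norm_smul_inv_norm hφ
  have hu : ‖u‖ = 1 := norm_smul_inv_norm hy
  have hψu : ψ u = 1 := by
    have hle : ‖ψ u‖ ≤ 1 := by simpa [hψ, hu] using ψ.le_opNorm u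
    have hge : 1 ≤ re (ψ u) := by
      have hre : re (ψ u) = (‖φ‖ * ‖y‖)⁻¹ * re (φ y) := by
        simp only [ψ, u, smul_apply, map_smul, smul_eq_mul, ← mul_assoc, ← ofReal_inv,
          ← ofReal_mul, re_ofReal_mul]
        ring
      rw [hre, le_inv_mul_iff₀ (by positivity), mul_one]
      exact hφy
    rw [← re_eq_self_of_le (hle.trans hge), le_antisymm ((re_le_norm _).trans hle) hge, ofReal_one]
  have hφS : φ (S y) = ((‖φ‖ * ‖y‖ : ℝ) : 𝕜) * ψ (S u) := by
    have hφ' : (‖φ‖ : 𝕜) ≠ 0 := by simpa using hφ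
    have hy' : (‖y‖ : 𝕜) ≠ 0 := by simpa using hy
    simp only [ψ, u, smul_apply, map_smul, smul_eq_mul, ofReal_mul]
    field_simp
  rw [hφS, norm_mul, norm_ofReal, abs_of_nonneg (by positivity), mul_comm]
  gcongr
  exact le_numRadius S hu hψ hψu

end NumericalRadius

namespace Submodule

variable {𝕜 : Type*} [RCLike 𝕜] {X : Type*} [NormedAddCommGroup X] [NormedSpace 𝕜 X]

def IsAbsoluteSum (Y Z : Submodule 𝕜 X) : Prop :=
  ∀ (y y' : Y) (z z' : Z), ‖y‖ = ‖y'‖ → ‖z‖ = ‖z'‖ → ‖(y : X) + (z : X)‖ = ‖(y' : X) + (z' : X)‖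

namespace IsAbsoluteSum

variable {Y Z : Submodule 𝕜 X}

lemma symm (h : Y.IsAbsoluteSum Z) : Z.IsAbsoluteSum Y := fun z z' y y' hz hy => by
  rw [add_comm (z : X), add_comm (z' : X)]
  exact h y y' z z' hy hz

lemma norm_le_norm_add (h : Y.IsAbsoluteSum Z) (y : Y) (z : Z) : ‖(y : X)‖ ≤ ‖(y : X) + z‖ := by
  have hsub : ‖(y : X) - z‖ = ‖(y : X) + z‖ := by
    simpa [sub_eq_add_neg] using h y y (-z) z rfl (norm_neg z)
  have htwo : (2 : 𝕜) • (y : X) = ((y : X) + z) + ((y : X) - z) := by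
    rw [two_smul]
    abel
  have := norm_add_le ((y : X) + z) ((y : X) - z)
  rw [← htwo, norm_smul, RCLike.norm_two, hsub] at this
  linarith

lemma norm_projectionOnto_le (h : Y.IsAbsoluteSum Z) (hc : IsCompl Y Z) (x : X) :
    ‖Y.projectionOnto Z hc x‖ ≤ ‖x‖ := by
  have := h.norm_le_norm_add (Y.projectionOnto Z hc x) (Z.projectionOnto Y hc.symm x)
  rwa [coe_projectionOnto_apply, coe_projectionOnto_apply,
    projection_add_projection_eq_self] at this

noncomputable def extendByZero (h : Y.IsAbsoluteSum Z) (hc : IsCompl Y Z) (S : Y →L[𝕜] Y) :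
    X →L[𝕜] X :=
  Y.subtypeL ∘L S ∘L
    (Y.projectionOnto Z hc).mkContinuous 1 fun x => by simpa using h.norm_projectionOnto_le hc x

lemma extendByZero_apply (h : Y.IsAbsoluteSum Z) (hc : IsCompl Y Z) (S : Y →L[𝕜] Y) (x : X) :
    h.extendByZero hc S x = S (Y.projectionOnto Z hc x) :=
  rfl

lemma norm_extendByZero (h : Y.IsAbsoluteSum Z) (hc : IsCompl Y Z) (S : Y →L[𝕜] Y) :
    ‖h.extendByZero hc S‖ = ‖S‖ := by
  refine le_antisymm (ContinuousLinearMap.opNorm_le_bound _ (norm_nonneg S) fun x => ?_)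
    (S.opNorm_le_bound (norm_nonneg _) fun u => ?_)
  · exact (S.le_opNorm _).trans (by gcongr; exact h.norm_projectionOnto_le hc x)
  · simpa [extendByZero_apply] using (h.extendByZero hc S).le_opNorm u

open RCLike in
lemma norm_comp_subtypeL_mul_norm_le_re (h : Y.IsAbsoluteSum Z) (hc : IsCompl Y Z) {x : X}
    {f : StrongDual 𝕜 X} (hx : ‖x‖ = 1) (hf : ‖f‖ ≤ 1) (hfx : f x = 1) :
    ‖f ∘L Y.subtypeL‖ * ‖Y.projectionOnto Z hc x‖ ≤ re (f (Y.projectionOnto Z hc x)) := by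
  set y := Y.projectionOnto Z hc x
  set z := Z.projectionOnto Y hc.symm x
  have hyz : (y : X) + z = x := projection_add_projection_eq_self hc x
  have hre : re (f y) + re (f z) = 1 := by rw [← map_add, ← map_add, hyz, hfx, one_re]
  have hunit : ∀ v : Y, ‖v‖ = 1 → ‖y‖ * ‖f v‖ ≤ re (f y) := by
    intro v hv
    obtain ⟨c, hc1, hcv⟩ := exists_norm_eq_mul_self (f v)
    set w : Y := ((‖y‖ : 𝕜) * c) • v
    have hw : ‖(w : X) + z‖ = 1 := by
      rw [h w y z z (by simp [w, norm_smul, hc1, hv]) rfl, hyz, hx]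
    have hfw : f (w + z) = ((‖y‖ * ‖f v‖ : ℝ) : 𝕜) + f z := by
      simp [w, hcv, mul_assoc]
    have : re (f (w + z)) ≤ 1 :=
      (re_le_norm _).trans ((f.le_opNorm_of_le hw.le).trans (by simpa using hf))
    rw [hfw, map_add, ofReal_re] at this
    linarith
  rcases eq_or_ne y 0 with hy | hy
  · simp [hy]
  have hy' : 0 < ‖y‖ := norm_pos_iff.mpr hy
  rw [← le_div_iff₀ hy']
  refine ContinuousLinearMap.opNorm_le_of_unit_norm ?_ fun v hv => ?_
  · exact div_nonneg ((mul_nonneg hy'.le (norm_nonneg _)).trans (hunit _ (norm_smul_inv_norm (𝕜 := 𝕜) hy))) hy'.le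
  · rw [le_div_iff₀ hy', mul_comm]
    exact hunit v hv

lemma numRadius_extendByZero_le (h : Y.IsAbsoluteSum Z) (hc : IsCompl Y Z) (S : Y →L[𝕜] Y) :
    numRadius 𝕜 X (h.extendByZero hc S) ≤ numRadius 𝕜 Y S := by
  refine Real.sSup_le ?_ (numRadius_nonneg S)
  rintro r ⟨x, f, hx, hf, hfx, rfl⟩
  have hφ : ‖f ∘L Y.subtypeL‖ ≤ 1 :=
    (f.opNorm_comp_le _).trans (by rw [hf, one_mul]; exact norm_subtypeL_le Y)
  have hy : ‖Y.projectionOnto Z hc x‖ ≤ 1 := hx ▸ h.norm_projectionOnto_le hc x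
  calc ‖f (h.extendByZero hc S x)‖
      = ‖(f ∘L Y.subtypeL) (S (Y.projectionOnto Z hc x))‖ := rfl
    _ ≤ numRadius 𝕜 Y S * (‖f ∘L Y.subtypeL‖ * ‖Y.projectionOnto Z hc x‖) :=
      norm_apply_le_numRadius_mul S (h.norm_comp_subtypeL_mul_norm_le_re hc hx hf.le hfx)
    _ ≤ numRadius 𝕜 Y S :=
      mul_le_of_le_one_right (numRadius_nonneg S) (mul_le_one₀ hφ (norm_nonneg _) hy)

theorem numIndex_le (h : Y.IsAbsoluteSum Z) (hc : IsCompl Y Z) [Nontrivial Y] :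
    numIndex 𝕜 X ≤ numIndex 𝕜 Y :=
  numIndex_le_numIndex_of_forall_exists fun S hS =>
    ⟨h.extendByZero hc S, (h.norm_extendByZero hc S).trans hS, h.numRadius_extendByZero_le hc S⟩

end IsAbsoluteSum

end Submodule

theorem numIndex_le_of_absolute_sum_general (𝕜 : Type*) [RCLike 𝕜] (X : Type*)
    [NormedAddCommGroup X] [NormedSpace 𝕜 X]
    (Y Z : Submodule 𝕜 X)
    (hcompl : IsCompl Y Z)
    (habs : ∀ (y y' : Y) (z z' : Z), ‖y‖ = ‖y'‖ → ‖z‖ = ‖z'‖ →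
      ‖(y : X) + (z : X)‖ = ‖(y' : X) + (z' : X)‖)
    (hYne : Y ≠ ⊥) (hZne : Z ≠ ⊥) :
    numIndex 𝕜 X ≤ min (numIndex 𝕜 Y) (numIndex 𝕜 Z) := by
  have habs : Y.IsAbsoluteSum Z := habs
  have : Nontrivial Y := Submodule.nontrivial_iff_ne_bot.mpr hYne
  have : Nontrivial Z := Submodule.nontrivial_iff_ne_bot.mpr hZne
  exact le_min (habs.numIndex_le hcompl) (habs.symm.numIndex_le hcompl.symm)

/-- If a Banach space `X` is the absolute (algebraic and topological) direct sum of two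
nonzero closed subspaces `Y` and `Z`, then `n(X) ≤ min {n(Y), n(Z)}`. -/
theorem numIndex_le_of_absolute_sum (𝕜 : Type*) [RCLike 𝕜] (X : Type*)
    [NormedAddCommGroup X] [NormedSpace 𝕜 X] [CompleteSpace X]
    (Y Z : Submodule 𝕜 X) (hY : IsClosed (Y : Set X)) (hZ : IsClosed (Z : Set X))
    (hcompl : IsCompl Y Z)
    (habs : ∀ (y y' : Y) (z z' : Z), ‖y‖ = ‖y'‖ → ‖z‖ = ‖z'‖ →
      ‖(y : X) + (z : X)‖ = ‖(y' : X) + (z' : X)‖)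
    (hYne : Y ≠ ⊥) (hZne : Z ≠ ⊥) :
    numIndex 𝕜 X ≤ min (numIndex 𝕜 Y) (numIndex 𝕜 Z) :=
  numIndex_le_of_absolute_sum_general 𝕜 X Y Z hcompl habs hYne hZne
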